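/- Let C denote the Cartan matrix of the root system E₈ (Mathlib's CartanMatrix.E₈). Let G₁ be the 10×10 block-diagonal integer matrix with blocks [[0,2],[2,0]] and -2·C (the Gram matrix of the lattice U(2) ⊕ E₈(-2)), and let G₂ be the 10×10 block-diagonal integer matrix with blocks [[0,1],[1,0]] and -2·C (the Gram matrix of the lattice U ⊕ E₈(-2)). Then there is no injective ℤ-linear map φ : ℤ^10 → ℤ^10 with torsion-free cokernel such that (φx)ᵀ G₂ (φy) = xᵀ G₁ y for all x, y ∈ ℤ^10; that is, U(2) ⊕ E₈(-2) admits no primitive embedding into U ⊕ E₈(-2). -/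

import Mathlib

open Matrix

/-- The Gram matrix of the lattice `U(2) ⊕ E₈(-2)`: block-diagonal with blocks `[[0,2],[2,0]]`
and `-2` times the `E₈` Cartan matrix. -/
def GramU2E8m2 : Matrix (Fin 2 ⊕ Fin 8) (Fin 2 ⊕ Fin 8) ℤ :=
  Matrix.fromBlocks !![0, 2; 2, 0] 0 0 ((-2 : ℤ) • CartanMatrix.E₈)

/-- The Gram matrix of the lattice `U ⊕ E₈(-2)`: block-diagonal with blocks `[[0,1],[1,0]]`
and `-2` times the `E₈` Cartan matrix. -/
def GramUE8m2 : Matrix (Fin 2 ⊕ Fin 8) (Fin 2 ⊕ Fin 8) ℤ :=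
  Matrix.fromBlocks !![0, 1; 1, 0] 0 0 ((-2 : ℤ) • CartanMatrix.E₈)

/-!
Both lattices have rank 10, so an embedding with torsion-free cokernel is onto: it would be an
isometry from `U(2) ⊕ E₈(-2)` onto `U ⊕ E₈(-2)`. But the form of `U(2) ⊕ E₈(-2)` takes only even
values, while the hyperbolic plane `U` contains two vectors pairing to `1`.
-/

theorem LinearMap.surjective_of_injective_of_isTorsionFree_quotient {R M : Type*} [CommRing R]
    [IsDomain R] [AddCommGroup M] [Module R M] [Module.Finite R M] {f : M →ₗ[R] M}
    (hf : Function.Injective f) [Module.IsTorsionFree R (M ⧸ LinearMap.range f)] :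
    Function.Surjective f := by
  have hrank := Submodule.finrank_quotient_add_finrank (LinearMap.range f)
  rw [LinearMap.finrank_range_of_inj hf, Nat.add_eq_right, Module.finrank_zero_iff,
    Submodule.Quotient.subsingleton_iff] at hrank
  exact LinearMap.range_eq_top.mp hrank

theorem Matrix.dvd_dotProduct_mulVec {ι R : Type*} [Fintype ι] [CommRing R] {d : R}
    {A : Matrix ι ι R} (hA : ∀ i j, d ∣ A i j) (x y : ι → R) : d ∣ x ⬝ᵥ (A *ᵥ y) :=
  Finset.dvd_sum fun i _ => (Finset.dvd_sum fun j _ => (hA i j).mul_right _).mul_left _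

theorem two_dvd_GramU2E8m2 (i j : Fin 2 ⊕ Fin 8) : (2 : ℤ) ∣ GramU2E8m2 i j := by
  rcases i with i | i <;> rcases j with j | j <;> fin_cases i <;> fin_cases j <;> decide

/-- The lattice `U(2) ⊕ E₈(-2)` admits no primitive embedding into `U ⊕ E₈(-2)`: there is no
injective `ℤ`-linear map with torsion-free cokernel transforming the one Gram matrix into the
other. -/
theorem no_primitive_embedding_U2E8m2_into_UE8m2 :
    ¬ ∃ φ : ((Fin 2 ⊕ Fin 8) → ℤ) →ₗ[ℤ] ((Fin 2 ⊕ Fin 8) → ℤ),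
      Function.Injective φ ∧
      NoZeroSMulDivisors ℤ (((Fin 2 ⊕ Fin 8) → ℤ) ⧸ LinearMap.range φ) ∧
      ∀ x y : (Fin 2 ⊕ Fin 8) → ℤ, φ x ⬝ᵥ (GramUE8m2 *ᵥ φ y) = x ⬝ᵥ (GramU2E8m2 *ᵥ y) := by
  rintro ⟨φ, hinj, htf, hisom⟩
  have hsurj := LinearMap.surjective_of_injective_of_isTorsionFree_quotient hinj
  obtain ⟨x, hx⟩ := hsurj (Pi.single (.inl 0) 1)
  obtain ⟨y, hy⟩ := hsurj (Pi.single (.inl 1) 1)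
  have hone : φ x ⬝ᵥ (GramUE8m2 *ᵥ φ y) = 1 := by
    rw [hx, hy, mulVec_single_one, single_dotProduct, one_mul]
    rfl
  have htwo : (2 : ℤ) ∣ 1 := hone ▸ hisom x y ▸ dvd_dotProduct_mulVec two_dvd_GramU2E8m2 x y
  exact absurd htwo (by norm_num)
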